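/- arXiv:1711.00271 — 3 statements merged into one kernel-verified Lean document; each statement's English description precedes it below -/
import Mathlib

section
/- Coercivity of the Nitsche bilinear form: Let V be a real inner-product space of vector fields with seminorms ‖∇×g‖_Ω (curl norm over the domain) and boundary norms ‖g‖_Γ, ‖∇×g‖_Γ. Define a(u,v) = ⟨∇×u, ∇×v⟩_Ω − ⟨∇×u, v×n⟩_Γ − ⟨u×n, ∇×v⟩_Γ + (γ/h)⟨u, v⟩_Γ. Assume the discrete trace estimate ‖h^{1/2} ∇×g‖²_Γ ≤ C̃ ‖∇×g‖²_Ω holds for all g in a finite-dimensional subspace V_h, and that |g×n| ≤ 2|g| pointwise on Γ. If γ > 4α and α > C̃ for some α > 0, then there exists a constant c > 0 such that a(g,g) ≥ c ( ‖∇×g‖²_Ω + ‖h^{-1/2} g‖²_Γ ) for all g ∈ V_h. -/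
open RealInnerProductSpace

set_option maxHeartbeats 1000000 in
/-- Coercivity of the Nitsche bilinear form
`a(u,v) = ⟨∇×u,∇×v⟩_Ω − ⟨∇×u, v×n⟩_Γ − ⟨u×n, ∇×v⟩_Γ + (γ/h)⟨u,v⟩_Γ`,
formulated abstractly via the linear maps `curlΩ` (curl on the domain),
`tr` (boundary trace), `crossN` (`g ↦ g×n` on the boundary) and `curlΓ`
(boundary trace of the curl).  Under the discrete trace estimate
`‖h^{1/2}∇×g‖²_Γ ≤ C̃‖∇×g‖²_Ω` on the discrete space `Vh`, the bound
`|g×n| ≤ 2|g|`, and `γ > 4α > 4C̃ > 0`-type conditions, the form is coercive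
with respect to `‖∇×g‖²_Ω + ‖h^{-1/2}g‖²_Γ`. -/
theorem nitsche_coercivity {V H₁ H₂ : Type*} [AddCommGroup V] [Module ℝ V]
    [NormedAddCommGroup H₁] [InnerProductSpace ℝ H₁]
    [NormedAddCommGroup H₂] [InnerProductSpace ℝ H₂]
    (curlΩ : V →ₗ[ℝ] H₁) (tr crossN curlΓ : V →ₗ[ℝ] H₂)
    (Vh : Submodule ℝ V) (γ h α Ct : ℝ) (hh : 0 < h)
    (htrace : ∀ g ∈ Vh, h * ‖curlΓ g‖ ^ 2 ≤ Ct * ‖curlΩ g‖ ^ 2)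
    (hcross : ∀ g : V, ‖crossN g‖ ≤ 2 * ‖tr g‖)
    (hα : 0 < α) (hαC : Ct < α) (hγ : 4 * α < γ) :
    ∃ c > 0, ∀ g ∈ Vh,
      ⟪curlΩ g, curlΩ g⟫ - ⟪curlΓ g, crossN g⟫ - ⟪crossN g, curlΓ g⟫
          + (γ / h) * ⟪tr g, tr g⟫
        ≥ c * (‖curlΩ g‖ ^ 2 + h⁻¹ * ‖tr g‖ ^ 2) := by
  refine ⟨min ((α - Ct) / α) (γ - 4 * α),
    lt_min (div_pos (by linarith) hα) (by linarith), ?_⟩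
  intro g hg
  set A := ‖curlΩ g‖ with hA
  set B := ‖tr g‖ with hB
  set D := ‖curlΓ g‖ with hD
  set E := ‖crossN g‖ with hE
  have hA0 : 0 ≤ A := norm_nonneg _
  have hB0 : 0 ≤ B := norm_nonneg _
  have hD0 : 0 ≤ D := norm_nonneg _
  have hE0 : 0 ≤ E := norm_nonneg _
  have h1 : ⟪curlΩ g, curlΩ g⟫ = A ^ 2 := real_inner_self_eq_norm_sq _
  have h2 : ⟪tr g, tr g⟫ = B ^ 2 := real_inner_self_eq_norm_sq _
  have h3 : ⟪crossN g, curlΓ g⟫ = ⟪curlΓ g, crossN g⟫ := real_inner_comm _ _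
  have hI : ⟪curlΓ g, crossN g⟫ ≤ D * E := real_inner_le_norm _ _
  have hEB : E ≤ 2 * B := hcross g
  have htr : h * D ^ 2 ≤ Ct * A ^ 2 := htrace g hg
  have hhne : h ≠ 0 := hh.ne'
  have hαne : α ≠ 0 := hα.ne'
  rw [h1, h2, h3]
  set I := ⟪curlΓ g, crossN g⟫ with hIdef
  -- Young + trace: 4 D B ≤ (Ct/α) A² + 4 α (h⁻¹ B²)
  have keynum : 0 ≤ Ct * A ^ 2 * h + 4 * α ^ 2 * B ^ 2 - 4 * D * B * (h * α) := by
    nlinarith [sq_nonneg (h * D - 2 * α * B), mul_le_mul_of_nonneg_right htr hh.le]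
  have keyeq : Ct / α * A ^ 2 + 4 * α * (h⁻¹ * B ^ 2) - 4 * D * B
      = (Ct * A ^ 2 * h + 4 * α ^ 2 * B ^ 2 - 4 * D * B * (h * α)) / (h * α) := by
    field_simp
  have key : 4 * D * B ≤ Ct / α * A ^ 2 + 4 * α * (h⁻¹ * B ^ 2) := by
    have := div_nonneg keynum (le_of_lt (mul_pos hh hα))
    linarith [keyeq ▸ this]
  have hI2 : 2 * I ≤ 4 * D * B := by nlinarith
  -- rewrite γ/h term
  have hγh : γ / h * B ^ 2 = γ * (h⁻¹ * B ^ 2) := by field_simp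
  have ht0 : 0 ≤ h⁻¹ * B ^ 2 := by positivity
  have hc1 : min ((α - Ct) / α) (γ - 4 * α) ≤ (α - Ct) / α := min_le_left _ _
  have hc2 : min ((α - Ct) / α) (γ - 4 * α) ≤ γ - 4 * α := min_le_right _ _
  have heq : (α - Ct) / α = 1 - Ct / α := by field_simp
  have m1 : min ((α - Ct) / α) (γ - 4 * α) * A ^ 2 ≤ (1 - Ct / α) * A ^ 2 :=
    mul_le_mul_of_nonneg_right (heq ▸ hc1) (sq_nonneg A)
  have m2 : min ((α - Ct) / α) (γ - 4 * α) * (h⁻¹ * B ^ 2) ≤ (γ - 4 * α) * (h⁻¹ * B ^ 2) :=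
    mul_le_mul_of_nonneg_right hc2 ht0
  rw [ge_iff_le, mul_add, hγh]
  linarith [m1, m2, key, hI2]
end

section
/- Coercivity of the streamline diffusion bilinear form (abstract version): Let H be a real Hilbert space, let 0 = t₀ < t₁ < ... < t_M = T be a partition, and let g : [0,T] → H be piecewise C¹ on each slab (t_m, t_{m+1}] with one-sided limits g₊(t_m), g₋(t_m). Let L(t) be a family of densely defined operators with ⟨L(t)u, u⟩ = 0 for all u in the relevant domain (skew-adjointness). Define B(g,g) = ∑_{m=0}^{M-1} ∫_{t_m}^{t_{m+1}} ⟨g' + Lg, g⟩ + δ‖g' + Lg‖² dt + ∑_{m=1}^{M-1} ⟨[g]_m, g₊(t_m)⟩ + ‖g₊(0)‖², where [g]_m = g₊(t_m) − g₋(t_m) and δ ≥ 0. Then B(g,g) = ½( ‖g₊(0)‖² + ‖g₋(T)‖² + ∑_{m=1}^{M-1} ‖[g]_m‖² + 2δ ∑_m ∫ ‖g' + Lg‖² dt ). -/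
open RealInnerProductSpace MeasureTheory

/-!
On each slab the skew term drops out of `⟪g' + Lg, g⟫`, which is then the derivative of `‖g‖² / 2`,
so the slab integrals contribute `½(‖g₋(t_{m+1})‖² - ‖g₊(t_m)‖²)`. The polarization identity
`⟪x - y, x⟫ = ½‖x - y‖² + ½(‖x‖² - ‖y‖²)` splits each jump term into `½‖[g]_m‖²` plus a difference
of squared traces, and together with the slab contributions these telescope to
`½(‖g₋(T)‖² - ‖g₊(0)‖²)`.
-/

section InnerProduct

variable {H : Type*} [NormedAddCommGroup H] [InnerProductSpace ℝ H]

theorem real_inner_sub_self_left (x y : H) :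
    ⟪x - y, x⟫ = ‖x - y‖ ^ 2 / 2 + (‖x‖ ^ 2 / 2 - ‖y‖ ^ 2 / 2) := by
  rw [norm_sub_sq_real, inner_sub_left, real_inner_self_eq_norm_sq, real_inner_comm]
  ring

theorem real_inner_add_apply_self_of_skew {A : H →ₗ[ℝ] H} (hA : ∀ u, ⟪A u, u⟫ = 0) (v u : H) :
    ⟪v + A u, u⟫ = ⟪v, u⟫ := by
  rw [inner_add_left, hA, add_zero]

theorem integral_real_inner_deriv_self {f f' : ℝ → H} {a b : ℝ}
    (hf : ∀ τ ∈ Set.uIcc a b, HasDerivAt f (f' τ) τ)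
    (hint : IntervalIntegrable (fun τ => ⟪f' τ, f τ⟫) volume a b) :
    ∫ τ in a..b, ⟪f' τ, f τ⟫ = ‖f b‖ ^ 2 / 2 - ‖f a‖ ^ 2 / 2 := by
  have hsq : ∀ τ ∈ Set.uIcc a b, HasDerivAt (fun s => ‖f s‖ ^ 2 / 2) ⟪f' τ, f τ⟫ τ := by
    intro τ hτ
    simp_rw [← real_inner_self_eq_norm_sq]
    refine (((hf τ hτ).inner ℝ (hf τ hτ)).div_const 2).congr_deriv ?_
    rw [real_inner_comm (f τ)]
    ring
  exact intervalIntegral.integral_eq_sub_of_hasDerivAt hsq hint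

theorem integral_inner_add_skew_add_mul_norm_sq {f f' : ℝ → H} {L : ℝ → H →ₗ[ℝ] H}
    (hL : ∀ τ u, ⟪L τ u, u⟫ = 0) (hf : ∀ τ, HasDerivAt f (f' τ) τ) (hf' : Continuous f')
    (hLf : Continuous fun τ => L τ (f τ)) (δ a b : ℝ) :
    ∫ τ in a..b, (⟪f' τ + L τ (f τ), f τ⟫ + δ * ‖f' τ + L τ (f τ)‖ ^ 2)
      = (‖f b‖ ^ 2 / 2 - ‖f a‖ ^ 2 / 2) + δ * ∫ τ in a..b, ‖f' τ + L τ (f τ)‖ ^ 2 := by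
  have hfc : Continuous f := continuous_iff_continuousAt.mpr fun τ => (hf τ).continuousAt
  have hres : Continuous fun τ => f' τ + L τ (f τ) := hf'.add hLf
  rw [intervalIntegral.integral_add ((hres.inner hfc).intervalIntegrable a b)
      ((by fun_prop : Continuous fun τ => δ * ‖f' τ + L τ (f τ)‖ ^ 2).intervalIntegrable a b),
    intervalIntegral.integral_const_mul]
  simp_rw [real_inner_add_apply_self_of_skew (hL _)]
  rw [integral_real_inner_deriv_self (fun τ _ => hf τ) ((hf'.inner hfc).intervalIntegrable a b)]

end InnerProduct

theorem Finset.sum_Icc_one_sub_one_eq_sum_range {β : Type*} [AddCommMonoid β] {M : ℕ}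
    {f : ℕ → β} (hf : f 0 = 0) :
    ∑ m ∈ Finset.Icc 1 (M - 1), f m = ∑ m ∈ Finset.range M, f m := by
  apply Finset.sum_subset
  · intro m hm
    simp only [Finset.mem_Icc, Finset.mem_range] at hm ⊢
    omega
  · intro m hmM hm
    obtain rfl : m = 0 := by
      simp only [Finset.mem_range, Finset.mem_Icc, not_and, not_le] at hmM hm
      omega
    exact hf

theorem sum_range_add_sum_Icc_telescope {β : Type*} [AddCommGroup β] (φ : ℕ → ℕ → β) (M : ℕ) :
    ∑ m ∈ Finset.range M, (φ m (m + 1) - φ m m)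
      + ∑ m ∈ Finset.Icc 1 (M - 1), (φ m m - φ (m - 1) m) = φ (M - 1) M - φ 0 0 := by
  -- the `m = 0` term of the jump sum is `φ 0 0 - φ (0 - 1) 0 = 0`, as `0 - 1 = 0` in `ℕ`
  rw [Finset.sum_Icc_one_sub_one_eq_sum_range (sub_self _), ← Finset.sum_add_distrib]
  simpa using Finset.sum_range_sub (fun m => φ (m - 1) m) M

theorem sd_coercivity_general {H : Type*} [NormedAddCommGroup H] [InnerProductSpace ℝ H]
    (M : ℕ) (t : ℕ → ℝ)
    (g g' : ℕ → ℝ → H) (L : ℝ → H →ₗ[ℝ] H)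
    (hL : ∀ τ u, ⟪L τ u, u⟫ = 0)
    (hderiv : ∀ m τ, HasDerivAt (g m) (g' m τ) τ)
    (hcont : ∀ m, Continuous (g' m))
    (hcontL : ∀ m, Continuous fun τ => L τ (g m τ))
    (δ : ℝ) :
    ((∑ m ∈ Finset.range M, ∫ τ in t m..t (m + 1),
        (⟪g' m τ + L τ (g m τ), g m τ⟫ + δ * ‖g' m τ + L τ (g m τ)‖ ^ 2))
      + (∑ m ∈ Finset.Icc 1 (M - 1), ⟪g m (t m) - g (m - 1) (t m), g m (t m)⟫)
      + ‖g 0 (t 0)‖ ^ 2)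
    = (1 / 2) * (‖g 0 (t 0)‖ ^ 2 + ‖g (M - 1) (t M)‖ ^ 2
      + (∑ m ∈ Finset.Icc 1 (M - 1), ‖g m (t m) - g (m - 1) (t m)‖ ^ 2)
      + 2 * δ * ∑ m ∈ Finset.range M, ∫ τ in t m..t (m + 1),
          ‖g' m τ + L τ (g m τ)‖ ^ 2) := by
  have hslab := fun m => integral_inner_add_skew_add_mul_norm_sq hL (hderiv m) (hcont m)
    (hcontL m) δ (t m) (t (m + 1))
  have htel := sum_range_add_sum_Icc_telescope (fun m k => ‖g m (t k)‖ ^ 2 / 2) M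
  beta_reduce at htel
  simp only [hslab, real_inner_sub_self_left, Finset.sum_add_distrib, ← Finset.mul_sum,
    ← Finset.sum_div]
  linear_combination htel

/-- Coercivity of the streamline diffusion bilinear form (abstract version):
with `g m` the `C¹` branch of the solution on the `m`-th slab
`(t m, t (m+1)]`, `L` a skew family of operators (`⟨L t u, u⟩ = 0`), and
`[g]_m = g m (t m) − g (m-1) (t m)` the jumps, the bilinear form `B(g,g)`
equals
`½(‖g₊(0)‖² + ‖g₋(T)‖² + ∑ ‖[g]_m‖² + 2δ ∑ ∫ ‖g' + Lg‖²)`. -/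
theorem sd_coercivity {H : Type*} [NormedAddCommGroup H] [InnerProductSpace ℝ H]
    [CompleteSpace H] (M : ℕ) (hM : 0 < M) (t : ℕ → ℝ)
    (ht : ∀ m, t m ≤ t (m + 1)) (g g' : ℕ → ℝ → H) (L : ℝ → H →ₗ[ℝ] H)
    (hL : ∀ τ u, ⟪L τ u, u⟫ = 0)
    (hderiv : ∀ m τ, HasDerivAt (g m) (g' m τ) τ)
    (hcont : ∀ m, Continuous (g' m))
    (hcontL : ∀ m, Continuous fun τ => L τ (g m τ))
    (δ : ℝ) (hδ : 0 ≤ δ) :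
    ((∑ m ∈ Finset.range M, ∫ τ in t m..t (m + 1),
        (⟪g' m τ + L τ (g m τ), g m τ⟫ + δ * ‖g' m τ + L τ (g m τ)‖ ^ 2))
      + (∑ m ∈ Finset.Icc 1 (M - 1), ⟪g m (t m) - g (m - 1) (t m), g m (t m)⟫)
      + ‖g 0 (t 0)‖ ^ 2)
    = (1 / 2) * (‖g 0 (t 0)‖ ^ 2 + ‖g (M - 1) (t M)‖ ^ 2
      + (∑ m ∈ Finset.Icc 1 (M - 1), ‖g m (t m) - g (m - 1) (t m)‖ ^ 2)
      + 2 * δ * ∑ m ∈ Finset.range M, ∫ τ in t m..t (m + 1),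
          ‖g' m τ + L τ (g m τ)‖ ^ 2) :=
  sd_coercivity_general M t g g' L hL hderiv hcont hcontL δ
end

section
/- Semidiscrete energy inequality: Let θ : [0,T] → H be C² into a real Hilbert space H with θ(0) = θ'(0) = 0, let a : H × H → ℝ be a symmetric positive-semidefinite bilinear form with t ↦ a(θ(t),θ(t)) differentiable and (d/dt)(‖θ'(t)‖² + a(θ(t),θ(t))) ≤ 2‖ρ''(t)‖ ‖θ'(t)‖ for some function ρ'' : [0,T] → H. Then for all t ∈ [0,T]: ‖θ'(t)‖² + a(θ(t),θ(t)) ≤ 4 ( ∫_0^T ‖ρ''(s)‖ ds )². -/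
open MeasureTheory

/-- Semidiscrete energy inequality: if `θ(0) = θ'(0) = 0`, `a` is a symmetric
positive-semidefinite bilinear form, and
`(d/dt)(‖θ'(t)‖² + a(θ(t),θ(t))) ≤ 2‖ρ''(t)‖‖θ'(t)‖` on `[0,T]`, then
`‖θ'(t)‖² + a(θ(t),θ(t)) ≤ 4 (∫_0^T ‖ρ''‖)²` for all `t ∈ [0,T]`. -/
theorem semidiscrete_energy_inequality {H : Type*} [NormedAddCommGroup H]
    [InnerProductSpace ℝ H] (T : ℝ) (hT : 0 ≤ T) (θ θ' ρ'' : ℝ → H)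
    (a : H →ₗ[ℝ] H →ₗ[ℝ] ℝ) (hsym : ∀ u v, a u v = a v u)
    (hpsd : ∀ u, 0 ≤ a u u) (hθ0 : θ 0 = 0) (hθ'0 : θ' 0 = 0)
    (hdθ : ∀ t, HasDerivAt θ (θ' t) t)
    (hcθ' : Continuous θ') (hcρ : Continuous ρ'')
    (D : ℝ → ℝ) (hcD : ContinuousOn D (Set.Icc 0 T))
    (hder : ∀ t ∈ Set.Icc 0 T,
      HasDerivAt (fun s => ‖θ' s‖ ^ 2 + a (θ s) (θ s)) (D t) t)
    (hD : ∀ t ∈ Set.Icc 0 T, D t ≤ 2 * ‖ρ'' t‖ * ‖θ' t‖) :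
    ∀ t ∈ Set.Icc 0 T,
      ‖θ' t‖ ^ 2 + a (θ t) (θ t)
        ≤ 4 * (∫ s in (0 : ℝ)..T, ‖ρ'' s‖) ^ 2 := by

  set A := ∫ s in (0:ℝ)..T, ‖ρ'' s‖ with hA
  have hAnn : 0 ≤ A := intervalIntegral.integral_nonneg hT (fun s _ => norm_nonneg _)
  obtain ⟨t₀, ht₀, hmax⟩ := (isCompact_Icc (a := (0:ℝ)) (b := T)).exists_isMaxOn
    (Set.nonempty_Icc.2 hT) hcθ'.norm.continuousOn
  set M := ‖θ' t₀‖ with hMdef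
  have hMnn : 0 ≤ M := norm_nonneg _
  have key : ∀ t ∈ Set.Icc (0:ℝ) T, ‖θ' t‖ ^ 2 + a (θ t) (θ t) ≤ 2 * A * M := by
    intro t ht
    obtain ⟨ht0, htT⟩ := ht
    have hsub : Set.uIcc (0:ℝ) t ⊆ Set.Icc 0 T := by
      rw [Set.uIcc_of_le ht0]; exact Set.Icc_subset_Icc le_rfl htT
    have hintD : IntervalIntegrable D volume 0 t := (hcD.mono hsub).intervalIntegrable
    have hFTC : (∫ s in (0:ℝ)..t, D s)
        = (‖θ' t‖ ^ 2 + a (θ t) (θ t)) - (‖θ' 0‖ ^ 2 + a (θ 0) (θ 0)) :=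
      intervalIntegral.integral_eq_sub_of_hasDerivAt (fun s hs => hder s (hsub hs)) hintD
    have hE0 : ‖θ' 0‖ ^ 2 + a (θ 0) (θ 0) = 0 := by simp [hθ'0, hθ0]
    have hintg : IntervalIntegrable (fun s => 2 * ‖ρ'' s‖ * ‖θ' s‖) volume 0 t :=
      ((continuous_const.mul hcρ.norm).mul hcθ'.norm).intervalIntegrable 0 t
    have h1 : (∫ s in (0:ℝ)..t, D s) ≤ ∫ s in (0:ℝ)..t, 2 * ‖ρ'' s‖ * ‖θ' s‖ :=
      intervalIntegral.integral_mono_on ht0 hintD hintg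
        (fun s hs => hD s (Set.Icc_subset_Icc le_rfl htT hs))
    have h2 : (∫ s in (0:ℝ)..t, 2 * ‖ρ'' s‖ * ‖θ' s‖)
        ≤ ∫ s in (0:ℝ)..t, 2 * ‖ρ'' s‖ * M := by
      apply intervalIntegral.integral_mono_on ht0 hintg
        (((continuous_const.mul hcρ.norm).mul continuous_const).intervalIntegrable 0 t)
      intro s hs
      have hms : ‖θ' s‖ ≤ M := hmax (Set.Icc_subset_Icc le_rfl htT hs)
      exact mul_le_mul_of_nonneg_left hms (by positivity)
    have h3 : (∫ s in (0:ℝ)..t, 2 * ‖ρ'' s‖ * M)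
        = 2 * M * ∫ s in (0:ℝ)..t, ‖ρ'' s‖ := by
      rw [← intervalIntegral.integral_const_mul]
      apply intervalIntegral.integral_congr
      intro s _; ring
    have h4 : (∫ s in (0:ℝ)..t, ‖ρ'' s‖) ≤ A := by
      apply intervalIntegral.integral_mono_interval le_rfl ht0 htT
        (Filter.Eventually.of_forall fun s => norm_nonneg _)
        (hcρ.norm.intervalIntegrable 0 T)
    have h5 : 2 * M * (∫ s in (0:ℝ)..t, ‖ρ'' s‖) ≤ 2 * M * A :=
      mul_le_mul_of_nonneg_left h4 (by positivity)
    nlinarith [h1, h2, h3, h5, hFTC, hE0]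
  intro t ht
  have hkt := key t ht
  have hkt0 := key t₀ ht₀
  have hM2 : M ^ 2 ≤ 2 * A * M := by
    have := hpsd (θ t₀)
    nlinarith [hkt0]
  nlinarith [hkt, hM2, sq_nonneg (M - 2 * A), hAnn, hMnn]
end
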